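/- Under the previous hypotheses (H₀ strongly regular diagonal, H₁ fully connected), an isospectral pair (ρ₁, ρ₂) of Hermitian matrices satisfies Tr(Bₘ[ρ₁,ρ₂]) = 0 for all m ≥ 1 if and only if [ρ₁, ρ₂] is a diagonal matrix. -/

import Mathlib

/-!
The entries of `Bₘ` are `(-i)^(m+1) (a_k - a_l)^m (H₁)_{kl}`, so
`Tr(Bₘ [ρ₁, ρ₂])` is, up to a nonzero factor, the power sum `∑_{k ≠ l} x_{kl} ω_{kl}^m` with weights
`x_{kl} = (H₁)_{kl} [ρ₁, ρ₂]_{lk}` and nodes `ω_{kl} = a_k - a_l`. Strong regularity makes the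
nodes pairwise distinct and nonzero, so all these power sums vanish exactly when all weights do
(Lagrange interpolation), and full connectivity turns that into the vanishing of the off-diagonal
entries of `[ρ₁, ρ₂]`.
-/

open Matrix

/-- The iterated adjoint brackets B₀ = −iH₁, B_{m+1} = [−iH₀, Bₘ]. -/
noncomputable def adB {n : ℕ} (H₀ H₁ : Matrix (Fin n) (Fin n) ℂ) : ℕ → Matrix (Fin n) (Fin n) ℂ
  | 0 => (-Complex.I) • H₁
  | m + 1 => ((-Complex.I) • H₀) * adB H₀ H₁ m - adB H₀ H₁ m * ((-Complex.I) • H₀)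

open Polynomial

section PowerSums

variable {ι K : Type*} [Field K] {s : Finset ι} {ω y : ι → K}

theorem sum_mul_eval_eq_zero_of_sum_mul_pow_eq_zero
    (h : ∀ j : ℕ, ∑ p ∈ s, y p * ω p ^ j = 0) (P : K[X]) :
    ∑ p ∈ s, y p * P.eval (ω p) = 0 := by
  simp_rw [eval_eq_sum_range, Finset.mul_sum]
  rw [Finset.sum_comm]
  refine Finset.sum_eq_zero fun j _ => ?_
  simp_rw [mul_left_comm (y _), ← Finset.mul_sum, h j, mul_zero]

theorem eq_zero_of_sum_mul_pow_eq_zero [DecidableEq ι] (hω : Set.InjOn ω s)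
    (h : ∀ j : ℕ, ∑ p ∈ s, y p * ω p ^ j = 0) : ∀ p ∈ s, y p = 0 := by
  intro p hp
  have hbasis := sum_mul_eval_eq_zero_of_sum_mul_pow_eq_zero h (Lagrange.basis s ω p)
  rwa [Finset.sum_eq_single_of_mem p hp fun q hq hqp => by
      rw [Lagrange.eval_basis_of_ne hqp.symm hq, mul_zero],
    Lagrange.eval_basis_self hω hp, mul_one] at hbasis

theorem eq_zero_of_sum_mul_pow_succ_eq_zero [DecidableEq ι] (hω : Set.InjOn ω s)
    (hω₀ : ∀ p ∈ s, ω p ≠ 0)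
    (h : ∀ m : ℕ, 1 ≤ m → ∑ p ∈ s, y p * ω p ^ m = 0) : ∀ p ∈ s, y p = 0 := by
  have hshift := eq_zero_of_sum_mul_pow_eq_zero (y := fun p => y p * ω p) hω fun j => by
    simpa only [mul_assoc, ← pow_succ'] using h (j + 1) (Nat.le_add_left 1 j)
  exact fun p hp => (mul_eq_zero.mp (hshift p hp)).resolve_right (hω₀ p hp)

end PowerSums

section StronglyRegular

variable {ι : Type*} [LinearOrder ι] {a : ι → ℝ}

theorem eq_or_eq_swap_of_abs_sub_eq
    (hreg : ∀ k l p q : ι, k < l → p < q → |a l - a k| = |a q - a p| → k = p ∧ l = q)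
    {k l p q : ι} (hkl : k ≠ l) (hpq : p ≠ q) (h : |a l - a k| = |a q - a p|) :
    (k = p ∧ l = q) ∨ (k = q ∧ l = p) := by
  rcases hkl.lt_or_gt with hkl | hkl <;> rcases hpq.lt_or_gt with hpq | hpq
  · exact .inl (hreg k l p q hkl hpq h)
  · exact .inr (hreg k l q p hkl hpq (by rwa [abs_sub_comm (a p)]))
  · exact .inr (hreg l k p q hkl hpq (by rwa [abs_sub_comm (a k)])).symm
  · exact .inl (hreg l k q p hkl hpq (by rwa [abs_sub_comm (a k), abs_sub_comm (a p)])).symm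

theorem sub_ne_zero_of_regular (hreg₀ : ∀ k l : ι, k < l → a l - a k ≠ 0) {k l : ι}
    (hkl : k ≠ l) : a k - a l ≠ 0 := by
  rcases hkl.lt_or_gt with h | h
  · rw [← neg_sub]
    exact neg_ne_zero.mpr (hreg₀ k l h)
  · exact hreg₀ l k h

theorem injOn_sub_of_stronglyRegular
    (hreg₀ : ∀ k l : ι, k < l → a l - a k ≠ 0)
    (hreg : ∀ k l p q : ι, k < l → p < q → |a l - a k| = |a q - a p| → k = p ∧ l = q) :
    Set.InjOn (fun p : ι × ι => a p.1 - a p.2) {p | p.1 ≠ p.2} := by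
  intro p hp q hq hpq
  have habs : |a p.2 - a p.1| = |a q.2 - a q.1| := by
    rw [abs_sub_comm, abs_sub_comm (a q.2)]
    exact congrArg abs hpq
  rcases eq_or_eq_swap_of_abs_sub_eq hreg hp hq habs with ⟨h₁, h₂⟩ | ⟨h₁, h₂⟩
  · exact Prod.ext h₁ h₂
  · simp only [h₁, h₂] at hpq
    exact absurd (by linarith) (sub_ne_zero_of_regular hreg₀ hq)

end StronglyRegular

section AdB

variable {n : ℕ} (d : Fin n → ℂ) (H₁ : Matrix (Fin n) (Fin n) ℂ)

theorem adB_diagonal_apply (m : ℕ) (k l : Fin n) :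
    adB (diagonal d) H₁ m k l = (-Complex.I) ^ (m + 1) * (d k - d l) ^ m * H₁ k l := by
  induction m with
  | zero => simp [adB]
  | succ m ih =>
    simp only [adB, Matrix.sub_apply, smul_mul_assoc, mul_smul_comm, Matrix.smul_apply,
      diagonal_mul, mul_diagonal, smul_eq_mul, ih]
    ring

theorem trace_adB_diagonal_mul {m : ℕ} (hm : m ≠ 0) (C : Matrix (Fin n) (Fin n) ℂ) :
    (adB (diagonal d) H₁ m * C).trace =
      (-Complex.I) ^ (m + 1) * ∑ p ∈ (Finset.univ : Finset (Fin n)).offDiag,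
        H₁ p.1 p.2 * C p.2 p.1 * (d p.1 - d p.2) ^ m := by
  have hdiag_terms : ∀ p ∈ (Finset.univ : Finset (Fin n × Fin n)),
      p ∉ (Finset.univ : Finset (Fin n)).offDiag →
        H₁ p.1 p.2 * C p.2 p.1 * (d p.1 - d p.2) ^ m = 0 := by
    intro p _ hp
    simp only [Finset.mem_offDiag, Finset.mem_univ, true_and, not_not] at hp
    simp [hp, zero_pow hm]
  rw [Finset.sum_subset (Finset.subset_univ _) hdiag_terms, Finset.mul_sum,
    Fintype.sum_prod_type, trace]
  simp only [diag_apply, mul_apply, adB_diagonal_apply]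
  refine Finset.sum_congr rfl fun k _ => Finset.sum_congr rfl fun l _ => ?_
  ring

end AdB

theorem stmt_7_general {n : ℕ} (a : Fin n → ℝ) (H₀ H₁ : Matrix (Fin n) (Fin n) ℂ)
    (hH₀ : H₀ = Matrix.diagonal (fun k => (a k : ℂ)))
    (hconn : ∀ k l : Fin n, k ≠ l → H₁ k l ≠ 0)
    (hreg₀ : ∀ k l : Fin n, k < l → a l - a k ≠ 0)
    (hreg : ∀ k l p q : Fin n, k < l → p < q →
      |a l - a k| = |a q - a p| → k = p ∧ l = q)
    (ρ₁ ρ₂ : Matrix (Fin n) (Fin n) ℂ) :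
    (∀ m : ℕ, 1 ≤ m → (adB H₀ H₁ m * (ρ₁ * ρ₂ - ρ₂ * ρ₁)).trace = 0) ↔
      (ρ₁ * ρ₂ - ρ₂ * ρ₁).IsDiag := by
  set C := ρ₁ * ρ₂ - ρ₂ * ρ₁
  subst hH₀
  have htrace m (hm : 1 ≤ m) :=
    trace_adB_diagonal_mul (fun k => (a k : ℂ)) H₁ (m := m) (by omega) C
  constructor
  · intro h i j hij
    have hnodes : Set.InjOn (fun p : Fin n × Fin n => (a p.1 : ℂ) - a p.2)
        (Finset.univ : Finset (Fin n)).offDiag := fun p hp q hq hpq =>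
      injOn_sub_of_stronglyRegular hreg₀ hreg (Finset.mem_offDiag.mp hp).2.2
        (Finset.mem_offDiag.mp hq).2.2 (by simp only at hpq ⊢; exact_mod_cast hpq)
    have hnodes₀ : ∀ p ∈ (Finset.univ : Finset (Fin n)).offDiag, (a p.1 : ℂ) - a p.2 ≠ 0 :=
      fun p hp => by exact_mod_cast sub_ne_zero_of_regular hreg₀ (Finset.mem_offDiag.mp hp).2.2
    have hpow m (hm : 1 ≤ m) := (mul_eq_zero.mp ((htrace m hm).symm.trans (h m hm))).resolve_left
      (pow_ne_zero _ (neg_ne_zero.mpr Complex.I_ne_zero))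
    have hweight := eq_zero_of_sum_mul_pow_succ_eq_zero hnodes hnodes₀ hpow (j, i)
      (Finset.mem_offDiag.mpr ⟨Finset.mem_univ _, Finset.mem_univ _, hij.symm⟩)
    exact (mul_eq_zero.mp hweight).resolve_left (hconn j i hij.symm)
  · intro hC m hm
    rw [htrace m hm]
    refine mul_eq_zero_of_right _ (Finset.sum_eq_zero fun p hp => ?_)
    rw [hC (Finset.mem_offDiag.mp hp).2.2.symm, mul_zero, zero_mul]

theorem stmt_7 {n : ℕ} (a : Fin n → ℝ) (H₀ H₁ : Matrix (Fin n) (Fin n) ℂ)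
    (hH₀ : H₀ = Matrix.diagonal (fun k => (a k : ℂ)))
    (hH₁ : H₁.IsHermitian)
    (hconn : ∀ k l : Fin n, k ≠ l → H₁ k l ≠ 0)
    (hreg₀ : ∀ k l : Fin n, k < l → a l - a k ≠ 0)
    (hreg : ∀ k l p q : Fin n, k < l → p < q →
      |a l - a k| = |a q - a p| → k = p ∧ l = q)
    (ρ₁ ρ₂ : Matrix (Fin n) (Fin n) ℂ)
    (hρ₁ : ρ₁.IsHermitian) (hρ₂ : ρ₂.IsHermitian)
    (hiso : ρ₁.charpoly = ρ₂.charpoly) :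
    (∀ m : ℕ, 1 ≤ m → (adB H₀ H₁ m * (ρ₁ * ρ₂ - ρ₂ * ρ₁)).trace = 0) ↔
      (ρ₁ * ρ₂ - ρ₂ * ρ₁).IsDiag :=
  stmt_7_general a H₀ H₁ hH₀ hconn hreg₀ hreg ρ₁ ρ₂
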